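/- Let δ ≥ 0 and let Θ be a δ-separability-preserving superchannel. For every bipartite quantum channel N, the generalized log-robustness satisfies LR(Θ[N]) ≤ LR(N) + log₂(1 + δ). -/

import Mathlib

open scoped BigOperators Kronecker ComplexOrder
open Matrix Filter

noncomputable section

namespace DynEnt

/-- A (not necessarily linear) map between matrix spaces. -/
abbrev MatMap (ι₀ ι₁ : Type) : Type := Matrix ι₀ ι₀ ℂ → Matrix ι₁ ι₁ ℂ

/-- The map `L ⊗ id_ρ`, acting trivially on a reference system indexed by `ρ`. -/
def tensorIdT {ι₀ ι₁ ρ : Type} (L : MatMap ι₀ ι₁)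
    (X : Matrix (ι₀ × ρ) (ι₀ × ρ) ℂ) : Matrix (ι₁ × ρ) (ι₁ × ρ) ℂ :=
  Matrix.of fun p q => L (Matrix.of fun i j => X (i, p.2) (j, q.2)) p.1 q.1

def IsLinearFun {ι₀ ι₁ : Type} (L : MatMap ι₀ ι₁) : Prop :=
  ∀ (c : ℂ) (X Y : Matrix ι₀ ι₀ ℂ), L (c • X + Y) = c • L X + L Y

def IsCompletelyPositive {ι₀ ι₁ : Type} [Fintype ι₀] [Fintype ι₁] (L : MatMap ι₀ ι₁) : Prop :=
  ∀ (r : ℕ) (X : Matrix (ι₀ × Fin r) (ι₀ × Fin r) ℂ), X.PosSemidef → (tensorIdT L X).PosSemidef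

def IsTracePreserving {ι₀ ι₁ : Type} [Fintype ι₀] [Fintype ι₁] (L : MatMap ι₀ ι₁) : Prop :=
  ∀ X, (L X).trace = X.trace

/-- A quantum channel: a linear, completely positive, trace-preserving map. -/
def IsChannel {ι₀ ι₁ : Type} [Fintype ι₀] [Fintype ι₁] (L : MatMap ι₀ ι₁) : Prop :=
  IsLinearFun L ∧ IsCompletelyPositive L ∧ IsTracePreserving L

/-- Tensor product of two matrix maps, defined on matrix units and extended linearly. -/
def tensorMap {α₀ α₁ β₀ β₁ : Type} [Fintype α₀] [DecidableEq α₀] [Fintype β₀] [DecidableEq β₀]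
    (LA : MatMap α₀ α₁) (LB : MatMap β₀ β₁) : MatMap (α₀ × β₀) (α₁ × β₁) :=
  fun X => ∑ i : α₀, ∑ j : α₀, ∑ k : β₀, ∑ l : β₀,
    X (i, k) (j, l) • (LA (Matrix.single i j 1) ⊗ₖ LB (Matrix.single k l 1))

/-- Separable bipartite channel (cut `α : β`). -/
def IsSepChannel {α₀ β₀ α₁ β₁ : Type}
    [Fintype α₀] [DecidableEq α₀] [Fintype β₀] [DecidableEq β₀] [Fintype α₁] [Fintype β₁]
    (N : MatMap (α₀ × β₀) (α₁ × β₁)) : Prop :=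
  IsChannel N ∧ ∃ (n : ℕ) (LA : Fin n → MatMap α₀ α₁) (LB : Fin n → MatMap β₀ β₁),
    (∀ k, IsLinearFun (LA k) ∧ IsCompletelyPositive (LA k) ∧
          IsLinearFun (LB k) ∧ IsCompletelyPositive (LB k)) ∧
    ∀ X, N X = ∑ k, tensorMap (LA k) (LB k) X

/-- The old Mathlib `Matrix.PosSemidef.sqrt`, removed from Mathlib. -/
def psdSqrt {ι : Type} [Fintype ι] [DecidableEq ι] {A : Matrix ι ι ℂ} (hA : A.PosSemidef) :
    Matrix ι ι ℂ :=
  (hA.1.eigenvectorUnitary : Matrix ι ι ℂ) *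
    Matrix.diagonal ((↑) ∘ (Real.sqrt ∘ hA.1.eigenvalues)) *
    (star hA.1.eigenvectorUnitary : Matrix ι ι ℂ)

/-- Trace norm `‖X‖₁ = tr √(X† X)`. -/
def traceNorm {ι : Type} [Fintype ι] [DecidableEq ι] (X : Matrix ι ι ℂ) : ℝ :=
  (psdSqrt (Matrix.posSemidef_conjTranspose_mul_self X)).trace.re

/-- Density matrix. -/
def IsState {ι : Type} [Fintype ι] (ρ : Matrix ι ι ℂ) : Prop :=
  ρ.PosSemidef ∧ ρ.trace = 1

/-- Pure state (rank-one density matrix). -/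
def IsPureState {ι : Type} [Fintype ι] (ρ : Matrix ι ι ℂ) : Prop :=
  ∃ v : ι → ℂ, (∑ i, Complex.normSq (v i)) = 1 ∧
    ρ = Matrix.vecMulVec v (fun i => star (v i))

/-- Diamond norm. -/
def diamondNorm {ι₀ ι₁ : Type} [Fintype ι₀] [Fintype ι₁] [DecidableEq ι₁]
    (L : MatMap ι₀ ι₁) : ℝ :=
  sSup { t : ℝ | ∃ (r : ℕ) (ρ : Matrix (ι₀ × Fin r) (ι₀ × Fin r) ℂ),
    ρ.PosSemidef ∧ ρ.trace = 1 ∧ t = traceNorm (tensorIdT L ρ) }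

section Bipartite

variable {α₀ β₀ α₁ β₁ α₀' β₀' α₁' β₁' : Type}
variable [Fintype α₀] [DecidableEq α₀] [Fintype β₀] [DecidableEq β₀]
variable [Fintype α₁] [DecidableEq α₁] [Fintype β₁] [DecidableEq β₁]
variable [Fintype α₀'] [DecidableEq α₀'] [Fintype β₀'] [DecidableEq β₀']
variable [Fintype α₁'] [DecidableEq α₁'] [Fintype β₁'] [DecidableEq β₁']

/-- Standard robustness w.r.t. separable channels. -/
def stdRobustness (N : MatMap (α₀ × β₀) (α₁ × β₁)) : ℝ :=
  sInf { s : ℝ | 0 ≤ s ∧ ∃ M : MatMap (α₀ × β₀) (α₁ × β₁), IsSepChannel M ∧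
    IsSepChannel (fun X => (1 + s)⁻¹ • (N X + s • M X)) }

/-- Generalized robustness w.r.t. separable channels. -/
def genRobustness (N : MatMap (α₀ × β₀) (α₁ × β₁)) : ℝ :=
  sInf { s : ℝ | 0 ≤ s ∧ ∃ M : MatMap (α₀ × β₀) (α₁ × β₁), IsChannel M ∧
    IsSepChannel (fun X => (1 + s)⁻¹ • (N X + s • M X)) }

/-- Standard log-robustness. -/
def LRs (N : MatMap (α₀ × β₀) (α₁ × β₁)) : ℝ := Real.logb 2 (1 + stdRobustness N)

/-- Generalized log-robustness. -/
def LRgen (N : MatMap (α₀ × β₀) (α₁ × β₁)) : ℝ := Real.logb 2 (1 + genRobustness N)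

/-- Smooth standard log-robustness. -/
def smoothLRs (ε : ℝ) (N : MatMap (α₀ × β₀) (α₁ × β₁)) : ℝ :=
  sInf { t : ℝ | ∃ N' : MatMap (α₀ × β₀) (α₁ × β₁), IsChannel N' ∧
    (1/2) * diamondNorm (fun X => N' X - N X) ≤ ε ∧ t = LRs N' }

/-- Smooth generalized log-robustness. -/
def smoothLRgen (ε : ℝ) (N : MatMap (α₀ × β₀) (α₁ × β₁)) : ℝ :=
  sInf { t : ℝ | ∃ N' : MatMap (α₀ × β₀) (α₁ × β₁), IsChannel N' ∧
    (1/2) * diamondNorm (fun X => N' X - N X) ≤ ε ∧ t = LRgen N' }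

end Bipartite

/-- A superchannel, given by pre- and post-processing channels with a memory system `Fin e`. -/
structure Superchannel (α₀ β₀ α₁ β₁ α₀' β₀' α₁' β₁' : Type)
    [Fintype α₀] [Fintype β₀] [Fintype α₁] [Fintype β₁]
    [Fintype α₀'] [Fintype β₀'] [Fintype α₁'] [Fintype β₁'] : Type where
  e : ℕ
  pre : MatMap (α₀' × β₀') ((α₀ × β₀) × Fin e)
  post : MatMap ((α₁ × β₁) × Fin e) (α₁' × β₁')
  pre_channel : IsChannel pre
  post_channel : IsChannel post

section Super

variable {α₀ β₀ α₁ β₁ α₀' β₀' α₁' β₁' : Type}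
variable [Fintype α₀] [DecidableEq α₀] [Fintype β₀] [DecidableEq β₀]
variable [Fintype α₁] [DecidableEq α₁] [Fintype β₁] [DecidableEq β₁]
variable [Fintype α₀'] [DecidableEq α₀'] [Fintype β₀'] [DecidableEq β₀']
variable [Fintype α₁'] [DecidableEq α₁'] [Fintype β₁'] [DecidableEq β₁']

/-- Action of a superchannel on a channel: `Θ[E] = post ∘ (E ⊗ id) ∘ pre`. -/
def Superchannel.apply (Θ : Superchannel α₀ β₀ α₁ β₁ α₀' β₀' α₁' β₁')
    (E : MatMap (α₀ × β₀) (α₁ × β₁)) : MatMap (α₀' × β₀') (α₁' × β₁') :=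
  fun X => Θ.post (tensorIdT E (Θ.pre X))

/-- Separability-preserving superchannel. -/
def IsSEPPSC (Θ : Superchannel α₀ β₀ α₁ β₁ α₀' β₀' α₁' β₁') : Prop :=
  ∀ M : MatMap (α₀ × β₀) (α₁ × β₁), IsSepChannel M → IsSepChannel (Θ.apply M)

/-- δ-separability-preserving superchannel. -/
def IsDeltaSEPPSC (δ : ℝ) (Θ : Superchannel α₀ β₀ α₁ β₁ α₀' β₀' α₁' β₁') : Prop :=
  ∀ M : MatMap (α₀ × β₀) (α₁ × β₁), IsSepChannel M → genRobustness (Θ.apply M) ≤ δ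

end Super

/-- The swap unitary `F = Σ |ij⟩⟨ji|` on `ℂ^K ⊗ ℂ^K`. -/
def swapMatrix (K : ℕ) : Matrix (Fin K × Fin K) (Fin K × Fin K) ℂ :=
  Matrix.of fun p q => if p.1 = q.2 ∧ p.2 = q.1 then 1 else 0

/-- The `K`-swap channel `X ↦ F X F†`. -/
def swapChannel (K : ℕ) : MatMap (Fin K × Fin K) (Fin K × Fin K) :=
  fun X => swapMatrix K * X * (swapMatrix K)ᴴ

/-- The density matrix of the `K`-maximally entangled state inside `ℂ^{dA} ⊗ ℂ^{dB}`. -/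
def maxEntangled (dA dB K : ℕ) : Matrix (Fin dA × Fin dB) (Fin dA × Fin dB) ℂ :=
  Matrix.of fun p q =>
    if (p.1 : ℕ) = (p.2 : ℕ) ∧ (q.1 : ℕ) = (q.2 : ℕ) ∧ (p.1 : ℕ) < K ∧ (q.1 : ℕ) < K
    then (1 / K : ℂ) else 0

/-- Separable bipartite state. -/
def IsSepState {ιA ιB : Type} [Fintype ιA] [Fintype ιB]
    (σ : Matrix (ιA × ιB) (ιA × ιB) ℂ) : Prop :=
  ∃ (n : ℕ) (p : Fin n → ℝ) (φ : Fin n → ιA → ℂ) (ψ : Fin n → ιB → ℂ),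
    (∀ a, 0 ≤ p a) ∧ (∑ a, p a) = 1 ∧
    (∀ a, (∑ i, Complex.normSq (φ a i)) = 1) ∧
    (∀ a, (∑ i, Complex.normSq (ψ a i)) = 1) ∧
    σ = ∑ a, (p a : ℂ) •
      (Matrix.vecMulVec (φ a) (fun i => star (φ a i)) ⊗ₖ
       Matrix.vecMulVec (ψ a) (fun i => star (ψ a i)))

/-- Input state `Φ^{a₀}_{A₀Ã₀} ⊗ Φ^{b₀}_{B₀B̃₀}` for the Choi matrix, with index
grouping `(A₀ × B₀) × (Ã₀ × B̃₀)`. -/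
def choiInput (a₀ b₀ : ℕ) :
    Matrix ((Fin a₀ × Fin b₀) × (Fin a₀ × Fin b₀)) ((Fin a₀ × Fin b₀) × (Fin a₀ × Fin b₀)) ℂ :=
  Matrix.of fun p q =>
    maxEntangled a₀ a₀ a₀ (p.1.1, p.2.1) (q.1.1, q.2.1) *
    maxEntangled b₀ b₀ b₀ (p.1.2, p.2.2) (q.1.2, q.2.2)

/-- Normalized Choi matrix of a bipartite channel. -/
def choiBi {a₀ b₀ : ℕ} {ι₁ : Type} (E : MatMap (Fin a₀ × Fin b₀) ι₁) :
    Matrix (ι₁ × (Fin a₀ × Fin b₀)) (ι₁ × (Fin a₀ × Fin b₀)) ℂ :=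
  tensorIdT E (choiInput a₀ b₀)

/-- Normalized Choi matrix of a single-system channel. -/
def choi1 {d : ℕ} {ι₁ : Type} (N : MatMap (Fin d) ι₁) :
    Matrix (ι₁ × Fin d) (ι₁ × Fin d) ℂ :=
  tensorIdT N (maxEntangled d d d)

open Classical in
/-- Square root of a matrix (positive semidefinite case, junk value `0` otherwise). -/
def matSqrt {ι : Type} [Fintype ι] [DecidableEq ι] (A : Matrix ι ι ℂ) : Matrix ι ι ℂ :=
  if h : A.PosSemidef then psdSqrt h else 0

/-- Fidelity `F(ρ,σ) = (tr √(√ρ σ √ρ))²`. -/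
def fidelity {ι : Type} [Fintype ι] [DecidableEq ι] (ρ σ : Matrix ι ι ℂ) : ℝ :=
  ((matSqrt (matSqrt ρ * σ * matSqrt ρ)).trace.re) ^ 2

section OpTasks

variable {α₀ β₀ α₁ β₁ α₀' β₀' α₁' β₁' : Type}
variable [Fintype α₀] [DecidableEq α₀] [Fintype β₀] [DecidableEq β₀]
variable [Fintype α₁] [DecidableEq α₁] [Fintype β₁] [DecidableEq β₁]
variable [Fintype α₀'] [DecidableEq α₀'] [Fintype β₀'] [DecidableEq β₀']
variable [Fintype α₁'] [DecidableEq α₁'] [Fintype β₁'] [DecidableEq β₁']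

/-- One-shot dynamic entanglement cost under SEPPSC. -/
def oneShotCostSEPP (ε : ℝ) (N : MatMap (α₀ × β₀) (α₁ × β₁)) : ℝ :=
  sInf { t : ℝ | ∃ (K : ℕ) (Θ : Superchannel (Fin K) (Fin K) (Fin K) (Fin K) α₀ β₀ α₁ β₁),
    IsSEPPSC Θ ∧
    (1/2) * diamondNorm (fun X => Θ.apply (swapChannel K) X - N X) ≤ ε ∧
    t = Real.logb 2 ((K : ℝ) ^ 2) }

/-- One-shot distillable dynamic entanglement under SEPPSC. -/
def oneShotDistillSEPP (ε : ℝ) (N : MatMap (α₀ × β₀) (α₁ × β₁)) : ℝ :=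
  sSup { t : ℝ | ∃ (K : ℕ) (Θ : Superchannel α₀ β₀ α₁ β₁ (Fin K) (Fin K) (Fin K) (Fin K)),
    IsSEPPSC Θ ∧
    (1/2) * diamondNorm (fun X => Θ.apply N X - swapChannel K X) ≤ ε ∧
    t = Real.logb 2 ((K : ℝ) ^ 2) }

/-- Hypothesis-testing relative entropy of dynamic entanglement. -/
def EH (ε : ℝ) (N : MatMap (α₀ × β₀) (α₁ × β₁)) : ℝ :=
  sSup { t : ℝ | ∃ (r : ℕ) (Ψ : Matrix ((α₀ × β₀) × Fin r) ((α₀ × β₀) × Fin r) ℂ)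
      (Q : Matrix ((α₁ × β₁) × Fin r) ((α₁ × β₁) × Fin r) ℂ),
    IsPureState Ψ ∧ Q.PosSemidef ∧ ((1 : Matrix ((α₁ × β₁) × Fin r) ((α₁ × β₁) × Fin r) ℂ) - Q).PosSemidef ∧
    1 - ε ≤ ((tensorIdT N Ψ * Q).trace).re ∧
    t = sInf { u : ℝ | ∃ M : MatMap (α₀ × β₀) (α₁ × β₁), IsSepChannel M ∧
        u = - Real.logb 2 (((tensorIdT M Ψ * Q).trace).re) } }

end OpTasks

/-- Reindexing a matrix map along equivalences of index types. -/
def reindexMap {ι₀ ι₁ κ₀ κ₁ : Type} (e₀ : ι₀ ≃ κ₀) (e₁ : ι₁ ≃ κ₁) (L : MatMap ι₀ ι₁) :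
    MatMap κ₀ κ₁ :=
  fun X => Matrix.reindex e₁ e₁ (L (Matrix.reindex e₀.symm e₀.symm X))

section Cat

variable {α₀ β₀ α₁ β₁ : Type}
variable [Fintype α₀] [DecidableEq α₀] [Fintype β₀] [DecidableEq β₀]
variable [Fintype α₁] [DecidableEq α₁] [Fintype β₁] [DecidableEq β₁]

/-- `N ⊗ F^L` as a bipartite channel for the cut `A C : B D` (catalyst `CD` of dimension `L×L`). -/
def tensorSwapCut (N : MatMap (α₀ × β₀) (α₁ × β₁)) (L : ℕ) :
    MatMap ((α₀ × Fin L) × (β₀ × Fin L)) ((α₁ × Fin L) × (β₁ × Fin L)) :=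
  reindexMap (Equiv.prodProdProdComm α₀ β₀ (Fin L) (Fin L))
             (Equiv.prodProdProdComm α₁ β₁ (Fin L) (Fin L))
             (tensorMap N (swapChannel L))

/-- One-shot catalytic dynamic entanglement cost under δ-SEPPSC. -/
def catalyticCost (δ ε : ℝ) (N : MatMap (α₀ × β₀) (α₁ × β₁)) : ℝ :=
  sInf { t : ℝ | ∃ (K L : ℕ)
      (Θ : Superchannel (Fin K × Fin L) (Fin K × Fin L) (Fin K × Fin L) (Fin K × Fin L)
            (α₀ × Fin L) (β₀ × Fin L) (α₁ × Fin L) (β₁ × Fin L)),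
    IsDeltaSEPPSC δ Θ ∧
    ∃ N' : MatMap (α₀ × β₀) (α₁ × β₁), IsChannel N' ∧
      (1/2) * diamondNorm (fun X => N' X - N X) ≤ ε ∧
      Θ.apply (tensorSwapCut (swapChannel K) L) = tensorSwapCut N' L ∧
      t = Real.logb 2 ((K : ℝ) ^ 2) }

end Cat

/-- Discrete Weyl operators on `ℂ^K`. -/
def weyl (K : ℕ) (k l : Fin K) : Matrix (Fin K) (Fin K) ℂ :=
  Matrix.of fun a s =>
    if (a : ℕ) = ((k : ℕ) + (s : ℕ)) % K
    then Complex.exp (2 * (Real.pi : ℂ) * Complex.I * ((s : ℕ) : ℂ) * ((l : ℕ) : ℂ) / (K : ℂ))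
    else 0

/-- `n`-fold tensor power of a matrix. -/
def matPow {ι : Type} [Fintype ι] (X : Matrix ι ι ℂ) (n : ℕ) :
    Matrix (Fin n → ι) (Fin n → ι) ℂ :=
  Matrix.of fun f g => ∏ t, X (f t) (g t)

/-- `n`-fold tensor power of a matrix map. -/
def powMap {ι₀ ι₁ : Type} [Fintype ι₀] [DecidableEq ι₀] (L : MatMap ι₀ ι₁) (n : ℕ) :
    MatMap (Fin n → ι₀) (Fin n → ι₁) :=
  fun X => Matrix.of fun f' g' => ∑ f : Fin n → ι₀, ∑ g : Fin n → ι₀,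
    X f g * ∏ t, L (Matrix.single (f t) (g t) 1) (f' t) (g' t)

section Pow

variable {α₀ β₀ α₁ β₁ : Type}
variable [Fintype α₀] [DecidableEq α₀] [Fintype β₀] [DecidableEq β₀]
variable [Fintype α₁] [DecidableEq α₁] [Fintype β₁] [DecidableEq β₁]

/-- `n`-fold tensor power of a bipartite channel, with cut `A^n : B^n`. -/
def powBi (N : MatMap (α₀ × β₀) (α₁ × β₁)) (n : ℕ) :
    MatMap ((Fin n → α₀) × (Fin n → β₀)) ((Fin n → α₁) × (Fin n → β₁)) :=
  reindexMap (Equiv.arrowProdEquivProdArrow (Fin n) (fun _ => α₀) (fun _ => β₀))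
             (Equiv.arrowProdEquivProdArrow (Fin n) (fun _ => α₁) (fun _ => β₁))
             (powMap N n)

/-- `φ^{⊗n}` of a bipartite input-reference state, regrouped as
`((A₀ⁿ × B₀ⁿ) × refⁿ)`. -/
def phiPow (n : ℕ)
    (φ : Matrix ((α₀ × β₀) × (α₀ × β₀)) ((α₀ × β₀) × (α₀ × β₀)) ℂ) :
    Matrix (((Fin n → α₀) × (Fin n → β₀)) × (Fin n → (α₀ × β₀)))
           (((Fin n → α₀) × (Fin n → β₀)) × (Fin n → (α₀ × β₀))) ℂ :=
  Matrix.reindex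
    ((Equiv.arrowProdEquivProdArrow (Fin n) (fun _ => α₀ × β₀) (fun _ => α₀ × β₀)).trans
      (Equiv.prodCongr (Equiv.arrowProdEquivProdArrow (Fin n) (fun _ => α₀) (fun _ => β₀)) (Equiv.refl _)))
    ((Equiv.arrowProdEquivProdArrow (Fin n) (fun _ => α₀ × β₀) (fun _ => α₀ × β₀)).trans
      (Equiv.prodCongr (Equiv.arrowProdEquivProdArrow (Fin n) (fun _ => α₀) (fun _ => β₀)) (Equiv.refl _)))
    (matPow φ n)

end Pow

open Classical in
/-- Base-2 matrix logarithm via the spectral decomposition (junk value `0` if not Hermitian). -/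
def matLogb2 {ι : Type} [Fintype ι] [DecidableEq ι] (A : Matrix ι ι ℂ) : Matrix ι ι ℂ :=
  if h : A.IsHermitian then
    (h.eigenvectorUnitary : Matrix ι ι ℂ) *
      Matrix.diagonal (fun i => ((Real.logb 2 (h.eigenvalues i) : ℝ) : ℂ)) *
      (star h.eigenvectorUnitary : Matrix ι ι ℂ)
  else 0

/-- Umegaki relative entropy `D(ρ‖σ) = tr ρ (log₂ ρ − log₂ σ)`. -/
def relEnt {ι : Type} [Fintype ι] [DecidableEq ι] (ρ σ : Matrix ι ι ℂ) : ℝ :=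
  ((ρ * (matLogb2 ρ - matLogb2 σ)).trace).re

section Liberal

variable {α₀ β₀ α₁ β₁ : Type}
variable [Fintype α₀] [DecidableEq α₀] [Fintype β₀] [DecidableEq β₀]
variable [Fintype α₁] [DecidableEq α₁] [Fintype β₁] [DecidableEq β₁]

/-- Zero-error one-shot dynamic entanglement cost under SEPPSC. -/
def zeroCostSEPP (N : MatMap (α₀ × β₀) (α₁ × β₁)) : ℝ :=
  sInf { t : ℝ | ∃ (K : ℕ) (Θ : Superchannel (Fin K) (Fin K) (Fin K) (Fin K) α₀ β₀ α₁ β₁),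
    IsSEPPSC Θ ∧ Θ.apply (swapChannel K) = N ∧ t = Real.logb 2 ((K : ℝ) ^ 2) }

/-- Liberal (asymptotic) dynamic entanglement cost under SEPPSC. -/
def liberalCost (N : MatMap (α₀ × β₀) (α₁ × β₁)) : ℝ :=
  limUnder (nhdsWithin (0 : ℝ) (Set.Ioi 0)) (fun ε : ℝ =>
    liminf (fun n : ℕ =>
      (1 / (n : ℝ)) * sSup { t : ℝ |
        ∃ φ : Matrix ((α₀ × β₀) × (α₀ × β₀)) ((α₀ × β₀) × (α₀ × β₀)) ℂ, IsState φ ∧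
          t = sInf { u : ℝ |
            ∃ N'' : MatMap ((Fin n → α₀) × (Fin n → β₀)) ((Fin n → α₁) × (Fin n → β₁)),
              IsChannel N'' ∧
              (1/2) * traceNorm
                (tensorIdT N'' (phiPow n φ) - tensorIdT (powBi N n) (phiPow n φ)) ≤ ε ∧
              u = zeroCostSEPP N'' } }) atTop)

/-- Liberal regularized relative entropy with respect to separable channels. -/
def liberalRelEnt (N : MatMap (α₀ × β₀) (α₁ × β₁)) : ℝ :=
  limUnder atTop (fun n : ℕ =>
    (1 / (n : ℝ)) * sSup { t : ℝ |
      ∃ φ : Matrix ((α₀ × β₀) × (α₀ × β₀)) ((α₀ × β₀) × (α₀ × β₀)) ℂ, IsState φ ∧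
        t = sInf { u : ℝ | ∃ M : MatMap (α₀ × β₀) (α₁ × β₁), IsSepChannel M ∧
          u = relEnt (tensorIdT (powBi N n) (phiPow n φ))
                     (tensorIdT (powBi M n) (phiPow n φ)) } })

end Liberal

/-!
Let `(N + s M)/(1 + s)` be separable. Its image under `Θ` has generalized robustness at most `δ`,
so `(Θ[(N + s M)/(1 + s)] + r M')/(1 + r)` is separable for some channel `M'` and some `r`
arbitrarily close to `δ`. Since `Θ` is affine, this mixture equals
`(Θ[N] + s Θ[M] + (1 + s) r M')/((1 + s)(1 + r))`, which exhibits `(1 + s)(1 + r) - 1` as an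
admissible robustness of `Θ[N]`. Taking infima over `r` and then over `s` gives
`1 + R(Θ[N]) ≤ (1 + R(N))(1 + δ)`, and the claim is its logarithm.

The infima are only meaningful because every channel has finite robustness (otherwise `sInf ∅ = 0`):
a channel `E` with output dimension `d` is dominated by the completely depolarizing channel `Ω`,
`(1 + d²) Ω - E` being completely positive by the operator inequality `Z ≤ d · (1 ⊗ tr₁ Z)`.
-/

section MatMapAlgebra

variable {ι₀ ι₁ ρ : Type}

namespace IsLinearFun

variable {L : MatMap ι₀ ι₁}

protected lemma map_zero (hL : IsLinearFun L) : L 0 = 0 := by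
  simpa using hL 1 0 0

protected lemma map_add (hL : IsLinearFun L) (X Y : Matrix ι₀ ι₀ ℂ) : L (X + Y) = L X + L Y := by
  simpa using hL 1 X Y

protected lemma map_smul (hL : IsLinearFun L) (c : ℂ) (X : Matrix ι₀ ι₀ ℂ) :
    L (c • X) = c • L X := by
  simpa [hL.map_zero] using hL c X 0

protected lemma map_real_smul (hL : IsLinearFun L) (r : ℝ) (X : Matrix ι₀ ι₀ ℂ) :
    L (r • X) = r • L X := by
  simpa only [algebraMap_smul] using hL.map_smul (algebraMap ℝ ℂ r) X

end IsLinearFun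

@[simp]
lemma tensorIdT_add (F G : MatMap ι₀ ι₁) (X : Matrix (ι₀ × ρ) (ι₀ × ρ) ℂ) :
    tensorIdT (fun Y => F Y + G Y) X = tensorIdT F X + tensorIdT G X := by
  ext; simp [tensorIdT]

@[simp]
lemma tensorIdT_sub (F G : MatMap ι₀ ι₁) (X : Matrix (ι₀ × ρ) (ι₀ × ρ) ℂ) :
    tensorIdT (fun Y => F Y - G Y) X = tensorIdT F X - tensorIdT G X := by
  ext; simp [tensorIdT]

@[simp]
lemma tensorIdT_smul (c : ℝ) (F : MatMap ι₀ ι₁) (X : Matrix (ι₀ × ρ) (ι₀ × ρ) ℂ) :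
    tensorIdT (fun Y => c • F Y) X = c • tensorIdT F X := by
  ext; simp [tensorIdT]

lemma IsLinearFun.tensorIdT {L : MatMap ι₀ ι₁} (hL : IsLinearFun L) :
    IsLinearFun (tensorIdT (ρ := ρ) L) := by
  intro c X Y
  ext p q
  have hslice : (Matrix.of fun i j => (c • X + Y) (i, p.2) (j, q.2))
      = c • (Matrix.of fun i j => X (i, p.2) (j, q.2))
        + Matrix.of fun i j => Y (i, p.2) (j, q.2) := by
    ext; simp
  change L (Matrix.of fun i j => (c • X + Y) (i, p.2) (j, q.2)) p.1 q.1 = _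
  rw [hslice, hL c]
  rfl

end MatMapAlgebra

section PartialTrace

variable {ι₀ ι₁ ρ : Type}

def traceLeft [Fintype ι₀] (Z : Matrix (ι₀ × ρ) (ι₀ × ρ) ℂ) : Matrix ρ ρ ℂ :=
  Matrix.of fun p q => ∑ m, Z (m, p) (m, q)

lemma trace_traceLeft [Fintype ι₀] [Fintype ρ] (Z : Matrix (ι₀ × ρ) (ι₀ × ρ) ℂ) :
    (traceLeft Z).trace = Z.trace := by
  simp only [traceLeft, Matrix.trace, Matrix.diag, Matrix.of_apply, Fintype.sum_prod_type]
  exact Finset.sum_comm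

lemma posSemidef_traceLeft [Fintype ι₀] [Fintype ρ] {Z : Matrix (ι₀ × ρ) (ι₀ × ρ) ℂ}
    (hZ : Z.PosSemidef) : (traceLeft Z).PosSemidef := by
  have hsum : traceLeft Z = ∑ m, Z.submatrix (fun p => (m, p)) (fun p => (m, p)) := by
    ext; simp [traceLeft, Matrix.sum_apply]
  rw [hsum]
  exact posSemidef_sum _ fun m _ => hZ.submatrix _

lemma IsTracePreserving.traceLeft_tensorIdT [Fintype ι₀] [Fintype ι₁] {L : MatMap ι₀ ι₁}
    (hL : IsTracePreserving L) (X : Matrix (ι₀ × ρ) (ι₀ × ρ) ℂ) :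
    traceLeft (tensorIdT L X) = traceLeft X := by
  ext p q
  simpa [Matrix.trace, traceLeft, tensorIdT] using hL (Matrix.of fun i j => X (i, p) (j, q))

lemma IsTracePreserving.trace_tensorIdT [Fintype ι₀] [Fintype ι₁] [Fintype ρ] {L : MatMap ι₀ ι₁}
    (hL : IsTracePreserving L) (X : Matrix (ι₀ × ρ) (ι₀ × ρ) ℂ) :
    (tensorIdT L X).trace = X.trace := by
  rw [← trace_traceLeft, hL.traceLeft_tensorIdT, trace_traceLeft]

end PartialTrace

section Channels

variable {ι₀ ι₁ ι₂ : Type} [Fintype ι₀] [Fintype ι₁] [Fintype ι₂]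

lemma IsCompletelyPositive.tensorIdT {L : MatMap ι₀ ι₁} (hL : IsCompletelyPositive L) (e : ℕ) :
    IsCompletelyPositive (tensorIdT (ρ := Fin e) L) := by
  intro r X hX
  -- merge the two reference systems `Fin e × Fin r` into one system `Fin (e * r)`
  let φ : ι₀ × Fin (e * r) → (ι₀ × Fin e) × Fin r :=
    fun z => ((z.1, (finProdFinEquiv.symm z.2).1), (finProdFinEquiv.symm z.2).2)
  let ψ : (ι₁ × Fin e) × Fin r → ι₁ × Fin (e * r) :=
    fun z => (z.1.1, finProdFinEquiv (z.1.2, z.2))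
  have hmerge : DynEnt.tensorIdT (DynEnt.tensorIdT L) X
      = (DynEnt.tensorIdT L (X.submatrix φ φ)).submatrix ψ ψ := by
    ext ⟨⟨_, _⟩, _⟩ ⟨⟨_, _⟩, _⟩
    simp only [DynEnt.tensorIdT, Matrix.submatrix_apply, Matrix.of_apply, φ, ψ,
      Equiv.symm_apply_apply]
  rw [hmerge]
  exact (hL (e * r) _ (hX.submatrix φ)).submatrix ψ

lemma IsChannel.tensorIdT {L : MatMap ι₀ ι₁} (hL : IsChannel L) (e : ℕ) :
    IsChannel (tensorIdT (ρ := Fin e) L) :=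
  ⟨hL.1.tensorIdT, hL.2.1.tensorIdT e, hL.2.2.trace_tensorIdT⟩

lemma IsChannel.comp {F : MatMap ι₁ ι₂} {G : MatMap ι₀ ι₁} (hF : IsChannel F)
    (hG : IsChannel G) : IsChannel fun X => F (G X) := by
  refine ⟨fun c X Y => ?_, fun r X hX => ?_, fun X => ?_⟩
  · simp only [hG.1 c X Y, hF.1 c (G X) (G Y)]
  · exact hF.2.1 r _ (hG.2.1 r X hX)
  · rw [hF.2.2, hG.2.2]

lemma IsChannel.convexCombination {F G : MatMap ι₀ ι₁} (hF : IsChannel F) (hG : IsChannel G)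
    {a b : ℝ} (ha : 0 ≤ a) (hb : 0 ≤ b) (hab : a + b = 1) :
    IsChannel fun X => a • F X + b • G X := by
  refine ⟨fun c X Y => ?_, fun r X hX => ?_, fun X => ?_⟩
  · simp only [hF.1 c X Y, hG.1 c X Y]
    module
  · simp only [tensorIdT_add, tensorIdT_smul]
    exact ((hF.2.1 r X hX).smul ha).add ((hG.2.1 r X hX).smul hb)
  · rw [Matrix.trace_add, Matrix.trace_smul, Matrix.trace_smul, hF.2.2, hG.2.2, ← add_smul, hab,
      one_smul]

end Channels

section Superchannel

variable {α₀ β₀ α₁ β₁ α₀' β₀' α₁' β₁' : Type} [Fintype α₀] [Fintype β₀] [Fintype α₁]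
  [Fintype β₁] [Fintype α₀'] [Fintype β₀'] [Fintype α₁'] [Fintype β₁']

lemma Superchannel.isChannel_apply (Θ : Superchannel α₀ β₀ α₁ β₁ α₀' β₀' α₁' β₁')
    {E : MatMap (α₀ × β₀) (α₁ × β₁)} (hE : IsChannel E) : IsChannel (Θ.apply E) :=
  Θ.post_channel.comp ((hE.tensorIdT Θ.e).comp Θ.pre_channel)

lemma Superchannel.apply_mix (Θ : Superchannel α₀ β₀ α₁ β₁ α₀' β₀' α₁' β₁') (c t : ℝ)
    (F G : MatMap (α₀ × β₀) (α₁ × β₁)) (X : Matrix (α₀' × β₀') (α₀' × β₀') ℂ) :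
    Θ.apply (fun Y => c • (F Y + t • G Y)) X = c • (Θ.apply F X + t • Θ.apply G X) := by
  have hpost := Θ.post_channel.1
  simp only [Superchannel.apply, tensorIdT_add, tensorIdT_smul, hpost.map_real_smul,
    hpost.map_add]

end Superchannel

section TraceLeftDomination

variable {κ ι ρ : Type} [Fintype κ] [Fintype ι] [Fintype ρ]

lemma _root_.Matrix.PosSemidef.dotProduct_mulVec_sum_le {Z : Matrix ι ι ℂ} (hZ : Z.PosSemidef)
    (u : κ → ι → ℂ) :
    star (∑ m, u m) ⬝ᵥ (Z *ᵥ ∑ m, u m)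
      ≤ (Fintype.card κ : ℂ) * ∑ m, star (u m) ⬝ᵥ (Z *ᵥ u m) := by
  set Q : (ι → ℂ) → (ι → ℂ) → ℂ := fun v w => star v ⬝ᵥ (Z *ᵥ w) with hQ
  have hexpand : ∀ v w, Q (v - w) (v - w) = Q v v + Q w w - Q v w - Q w v := by
    intro v w
    simp only [hQ, star_sub, Matrix.mulVec_sub, dotProduct_sub, sub_dotProduct]
    ring
  have hsum : Q (∑ m, u m) (∑ m, u m) = ∑ m, ∑ n, Q (u m) (u n) := by
    simp only [hQ, star_sum, Matrix.mulVec_sum, dotProduct_sum, sum_dotProduct]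
    exact Finset.sum_comm
  -- `∑ₘ ∑ₙ Q (uₘ - uₙ) (uₘ - uₙ) = 2 (card κ · ∑ₘ Q uₘ uₘ - Q (∑ u) (∑ u))`
  have hdiff : 0 ≤ ∑ m, ∑ n, Q (u m - u n) (u m - u n) :=
    Finset.sum_nonneg fun m _ => Finset.sum_nonneg fun n _ => hZ.dotProduct_mulVec_nonneg _
  simp only [hexpand, Finset.sum_add_distrib, Finset.sum_sub_distrib, Finset.sum_const,
    Finset.card_univ, nsmul_eq_mul] at hdiff
  rw [Finset.sum_comm (f := fun m n => Q (u n) (u m)), ← hsum, ← Finset.mul_sum] at hdiff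
  rw [← sub_nonneg]
  convert mul_nonneg (inv_nonneg.mpr zero_le_two) hdiff using 1
  ring

variable [DecidableEq ι]

lemma dotProduct_one_kronecker_traceLeft_mulVec (Z : Matrix (ι × ρ) (ι × ρ) ℂ) (x : ι × ρ → ℂ) :
    star x ⬝ᵥ (((1 : Matrix ι ι ℂ) ⊗ₖ traceLeft Z) *ᵥ x)
      = ∑ m, ∑ n, star (fun z : ι × ρ => if z.1 = n then x (m, z.2) else 0) ⬝ᵥ
          (Z *ᵥ fun z => if z.1 = n then x (m, z.2) else 0) := by
  simp [dotProduct, Matrix.mulVec, Matrix.kroneckerMap_apply, traceLeft, Fintype.sum_prod_type,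
    Matrix.one_apply, Finset.mul_sum, Finset.sum_mul, ite_mul, mul_ite, apply_ite (starRingEnd ℂ)]
  exact Finset.sum_congr rfl fun m _ =>
    (Finset.sum_congr rfl fun p _ => Finset.sum_comm).trans Finset.sum_comm

lemma posSemidef_card_smul_one_kronecker_traceLeft_sub {Z : Matrix (ι × ρ) (ι × ρ) ℂ}
    (hZ : Z.PosSemidef) :
    ((Fintype.card ι : ℝ) • ((1 : Matrix ι ι ℂ) ⊗ₖ traceLeft Z) - Z).PosSemidef := by
  have hK : ((1 : Matrix ι ι ℂ) ⊗ₖ traceLeft Z).PosSemidef :=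
    Matrix.PosSemidef.one.kronecker (posSemidef_traceLeft hZ)
  refine .of_dotProduct_mulVec_nonneg
    ((hK.smul (Nat.cast_nonneg (Fintype.card ι))).isHermitian.sub hZ.isHermitian) fun x => ?_
  let Q : (ι × ρ → ℂ) → ℂ := fun v => star v ⬝ᵥ (Z *ᵥ v)
  -- `block m n` is the `m`-th slice of `x`, moved into the `n`-th block
  let block : ι → ι → ι × ρ → ℂ := fun m n z => if z.1 = n then x (m, z.2) else 0
  have hx : ∑ m, block m m = x := by
    ext z
    simp [block]
  have hdiag : ∑ m, Q (block m m) ≤ ∑ m, ∑ n, Q (block m n) :=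
    Finset.sum_le_sum fun m _ => Finset.single_le_sum (f := fun n => Q (block m n))
      (fun n _ => hZ.dotProduct_mulVec_nonneg _) (Finset.mem_univ m)
  have hCS := hZ.dotProduct_mulVec_sum_le fun m => block m m
  rw [hx] at hCS
  rw [Matrix.sub_mulVec, dotProduct_sub, ← algebraMap_smul ℂ, Matrix.smul_mulVec, dotProduct_smul,
    dotProduct_one_kronecker_traceLeft_mulVec, sub_nonneg]
  calc Q x ≤ (Fintype.card ι : ℂ) * ∑ m, Q (block m m) := hCS
    _ ≤ (Fintype.card ι : ℂ) * ∑ m, ∑ n, Q (block m n) :=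
      mul_le_mul_of_nonneg_left hdiag (Nat.cast_nonneg _)
    _ = _ := by rw [Complex.coe_algebraMap, Complex.ofReal_natCast, smul_eq_mul]

end TraceLeftDomination

section Depolarizing

variable {ι₀ ι₁ ρ : Type} [Fintype ι₀] [Fintype ι₁] [DecidableEq ι₁]

variable (ι₀ ι₁) in
def depolarizing : MatMap ι₀ ι₁ :=
  fun X => ((Fintype.card ι₁ : ℂ)⁻¹ * X.trace) • 1

lemma isLinearFun_depolarizing : IsLinearFun (depolarizing ι₀ ι₁) := by
  intro c X Y
  simp only [depolarizing, Matrix.trace_add, Matrix.trace_smul, smul_eq_mul]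
  module

lemma isTracePreserving_depolarizing [Nonempty ι₁] :
    IsTracePreserving (depolarizing ι₀ ι₁) := by
  intro X
  have hcard : (Fintype.card ι₁ : ℂ) ≠ 0 := Nat.cast_ne_zero.mpr Fintype.card_ne_zero
  rw [depolarizing, Matrix.trace_smul, Matrix.trace_one, smul_eq_mul]
  field_simp

lemma tensorIdT_depolarizing (X : Matrix (ι₀ × ρ) (ι₀ × ρ) ℂ) :
    tensorIdT (depolarizing ι₀ ι₁) X
      = (Fintype.card ι₁ : ℝ)⁻¹ • ((1 : Matrix ι₁ ι₁ ℂ) ⊗ₖ traceLeft X) := by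
  ext ⟨m, p⟩ ⟨n, q⟩
  simp [tensorIdT, depolarizing, traceLeft, Matrix.one_apply, Matrix.trace]

lemma isCompletelyPositive_depolarizing :
    IsCompletelyPositive (depolarizing ι₀ ι₁) := by
  intro r X hX
  rw [tensorIdT_depolarizing]
  exact (Matrix.PosSemidef.one.kronecker (posSemidef_traceLeft hX)).smul (by positivity)

lemma isChannel_depolarizing [Nonempty ι₁] :
    IsChannel (depolarizing ι₀ ι₁) :=
  ⟨isLinearFun_depolarizing, isCompletelyPositive_depolarizing, isTracePreserving_depolarizing⟩

lemma depolarizing_single [DecidableEq ι₀] (i j : ι₀) :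
    depolarizing ι₀ ι₁ (Matrix.single i j 1)
      = (if i = j then (Fintype.card ι₁ : ℂ)⁻¹ else 0) • 1 := by
  split_ifs with h
  · rw [h, depolarizing, Matrix.trace_single_eq_same, mul_one]
  · rw [depolarizing, Matrix.trace_single_eq_of_ne _ _ _ h, mul_zero]

lemma tensorMap_depolarizing {κ₀ κ₁ : Type} [Fintype κ₀] [Fintype κ₁] [DecidableEq κ₁]
    [DecidableEq ι₀] [DecidableEq κ₀] (X : Matrix (ι₀ × κ₀) (ι₀ × κ₀) ℂ) :
    tensorMap (depolarizing ι₀ ι₁) (depolarizing κ₀ κ₁) X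
      = depolarizing (ι₀ × κ₀) (ι₁ × κ₁) X := by
  simp only [tensorMap, depolarizing_single, Matrix.smul_kronecker, Matrix.kronecker_smul,
    Matrix.one_kronecker_one, smul_smul, ← Finset.sum_smul]
  rw [depolarizing]
  congr 1
  simp [mul_ite, ite_mul, Matrix.trace, Fintype.sum_prod_type, Finset.mul_sum, mul_comm]

end Depolarizing

lemma IsChannel.isCompletelyPositive_depolarizing_smul_sub {ι₀ ι₁ : Type} [Fintype ι₀]
    [Fintype ι₁] [DecidableEq ι₁] [Nonempty ι₁] {E : MatMap ι₀ ι₁} (hE : IsChannel E) :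
    IsCompletelyPositive
      fun X => (1 + (Fintype.card ι₁ : ℝ) ^ 2) • depolarizing ι₀ ι₁ X - E X := by
  intro r X hX
  set d : ℝ := (Fintype.card ι₁ : ℝ)
  have hd : 0 < d := Nat.cast_pos.mpr Fintype.card_pos
  have hZ := hE.2.1 r X hX
  set K := (1 : Matrix ι₁ ι₁ ℂ) ⊗ₖ traceLeft (DynEnt.tensorIdT E X)
  have hK : K.PosSemidef := Matrix.PosSemidef.one.kronecker (posSemidef_traceLeft hZ)
  have hcoeff : (1 + d ^ 2) * d⁻¹ = d + d⁻¹ := by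
    field_simp
    ring
  rw [tensorIdT_sub, tensorIdT_smul, tensorIdT_depolarizing, ← hE.2.2.traceLeft_tensorIdT,
    smul_smul, hcoeff, add_smul, add_sub_right_comm]
  exact (posSemidef_card_smul_one_kronecker_traceLeft_sub hZ).add (hK.smul (by positivity))

section Robustness

variable {α₀ β₀ α₁ β₁ : Type} [Fintype α₀] [DecidableEq α₀] [Fintype β₀] [DecidableEq β₀]
  [Fintype α₁] [Fintype β₁]

lemma isSepChannel_depolarizing [DecidableEq α₁] [DecidableEq β₁] [Nonempty α₁] [Nonempty β₁] :
    IsSepChannel (depolarizing (α₀ × β₀) (α₁ × β₁)) :=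
  ⟨isChannel_depolarizing, 1, fun _ => depolarizing α₀ α₁, fun _ => depolarizing β₀ β₁,
    fun _ => ⟨isLinearFun_depolarizing, isCompletelyPositive_depolarizing,
      isLinearFun_depolarizing, isCompletelyPositive_depolarizing⟩,
    fun X => by rw [Fin.sum_univ_one, tensorMap_depolarizing]⟩

def genRobustnessSet (N : MatMap (α₀ × β₀) (α₁ × β₁)) : Set ℝ :=
  { s : ℝ | 0 ≤ s ∧ ∃ M : MatMap (α₀ × β₀) (α₁ × β₁), IsChannel M ∧
    IsSepChannel (fun X => (1 + s)⁻¹ • (N X + s • M X)) }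

lemma genRobustness_le {N : MatMap (α₀ × β₀) (α₁ × β₁)} {s : ℝ} (hs : s ∈ genRobustnessSet N) :
    genRobustness N ≤ s :=
  csInf_le ⟨0, fun _ ht => ht.1⟩ hs

lemma genRobustness_nonneg (N : MatMap (α₀ × β₀) (α₁ × β₁)) : 0 ≤ genRobustness N :=
  Real.sInf_nonneg fun _ ht => ht.1

lemma mem_genRobustnessSet_of_isCompletelyPositive_sub {N S : MatMap (α₀ × β₀) (α₁ × β₁)}
    (hN : IsChannel N) (hS : IsSepChannel S) {s : ℝ} (hs : 0 < s)
    (hcp : IsCompletelyPositive fun X => (1 + s) • S X - N X) : s ∈ genRobustnessSet N := by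
  refine ⟨hs.le, fun X => s⁻¹ • ((1 + s) • S X - N X),
    ⟨fun c X Y => ?_, fun r X hX => ?_, fun X => ?_⟩, ?_⟩
  · simp only [hS.1.1 c X Y, hN.1 c X Y]
    module
  · rw [tensorIdT_smul]
    exact (hcp r X hX).smul (inv_nonneg.mpr hs.le)
  · rw [Matrix.trace_smul, Matrix.trace_sub, Matrix.trace_smul, hS.1.2.2, hN.2.2]
    match_scalars
    field_simp
    ring
  · convert hS using 1
    funext X
    rw [smul_smul, mul_inv_cancel₀ hs.ne', one_smul, add_sub_cancel, smul_smul,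
      inv_mul_cancel₀ (by positivity), one_smul]

lemma genRobustnessSet_nonempty [DecidableEq α₁] [DecidableEq β₁]
    {N : MatMap (α₀ × β₀) (α₁ × β₁)} (hN : IsChannel N) : (genRobustnessSet N).Nonempty := by
  rcases isEmpty_or_nonempty (α₁ × β₁) with hempty | ⟨a, b⟩
  · exact ⟨0, le_rfl, N, hN, by simpa using hN, 0, Fin.elim0, Fin.elim0, fun k => k.elim0,
      fun _ => Subsingleton.elim _ _⟩
  · have : Nonempty α₁ := ⟨a⟩
    have : Nonempty β₁ := ⟨b⟩
    exact ⟨_, mem_genRobustnessSet_of_isCompletelyPositive_sub hN isSepChannel_depolarizing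
      (by positivity) hN.isCompletelyPositive_depolarizing_smul_sub⟩

lemma add_mem_genRobustnessSet_of_mix {N F G : MatMap (α₀ × β₀) (α₁ × β₁)} (hF : IsChannel F)
    (hG : IsChannel G) {a b : ℝ} (ha : 0 ≤ a) (hb : 0 ≤ b)
    (hsep : IsSepChannel fun X => (1 + (a + b))⁻¹ • (N X + (a • F X + b • G X))) :
    a + b ∈ genRobustnessSet N := by
  rcases (add_nonneg ha hb).eq_or_lt with hab | hab
  · obtain ⟨rfl, rfl⟩ : a = 0 ∧ b = 0 := ⟨by linarith, by linarith⟩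
    exact ⟨by simp, F, hF, by simpa using hsep⟩
  · refine ⟨hab.le, fun X => (a / (a + b)) • F X + (b / (a + b)) • G X,
      hF.convexCombination hG (by positivity) (by positivity) (by field_simp), ?_⟩
    convert hsep using 1
    funext X
    match_scalars <;> field_simp

end Robustness

lemma le_mul_one_add_csInf {S : Set ℝ} (hS : S.Nonempty) {a c : ℝ} (hc : 0 < c)
    (h : ∀ r ∈ S, a ≤ c * (1 + r)) : a ≤ c * (1 + sInf S) := by
  have hdiv : a / c - 1 ≤ sInf S := le_csInf hS fun r hr => by
    rw [sub_le_iff_le_add, div_le_iff₀ hc]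
    linarith [h r hr]
  calc a = c * (1 + (a / c - 1)) := by field_simp; ring
    _ ≤ c * (1 + sInf S) := by gcongr

section SuperchannelRobustness

variable {α₀ β₀ α₁ β₁ α₀' β₀' α₁' β₁' : Type}
  [Fintype α₀] [Fintype β₀] [Fintype α₁] [Fintype β₁]
  [Fintype α₀'] [DecidableEq α₀'] [Fintype β₀'] [DecidableEq β₀'] [Fintype α₁'] [Fintype β₁']

lemma Superchannel.mem_genRobustnessSet_apply (Θ : Superchannel α₀ β₀ α₁ β₁ α₀' β₀' α₁' β₁')
    {N M : MatMap (α₀ × β₀) (α₁ × β₁)} {M' : MatMap (α₀' × β₀') (α₁' × β₁')} {s r : ℝ}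
    (hs : 0 ≤ s) (hr : 0 ≤ r) (hM : IsChannel M) (hM' : IsChannel M')
    (hsep : IsSepChannel fun X =>
      (1 + r)⁻¹ • (Θ.apply (fun Y => (1 + s)⁻¹ • (N Y + s • M Y)) X + r • M' X)) :
    s + (1 + s) * r ∈ genRobustnessSet (Θ.apply N) := by
  refine add_mem_genRobustnessSet_of_mix (Θ.isChannel_apply hM) hM' hs (by positivity) ?_
  convert hsep using 1
  funext X
  rw [Θ.apply_mix]
  match_scalars <;> field_simp <;> ring

lemma one_add_genRobustness_apply_le [DecidableEq α₀] [DecidableEq β₀] [DecidableEq α₁']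
    [DecidableEq β₁'] {δ : ℝ}
    {Θ : Superchannel α₀ β₀ α₁ β₁ α₀' β₀' α₁' β₁'} (hΘ : IsDeltaSEPPSC δ Θ)
    {N : MatMap (α₀ × β₀) (α₁ × β₁)} {s : ℝ} (hs : s ∈ genRobustnessSet N) :
    1 + genRobustness (Θ.apply N) ≤ (1 + s) * (1 + δ) := by
  obtain ⟨hs0, M, hM, hsep⟩ := hs
  calc 1 + genRobustness (Θ.apply N)
      ≤ (1 + s) * (1 + genRobustness (Θ.apply fun X => (1 + s)⁻¹ • (N X + s • M X))) :=
        le_mul_one_add_csInf (genRobustnessSet_nonempty (Θ.isChannel_apply hsep.1))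
          (by positivity) fun r ⟨hr, M', hM', hsep'⟩ => by
            linarith [genRobustness_le (Θ.mem_genRobustnessSet_apply hs0 hr hM hM' hsep')]
    _ ≤ (1 + s) * (1 + δ) := by gcongr; exact hΘ _ hsep

end SuperchannelRobustness

section Statements


variable {α₀ β₀ α₁ β₁ α₀' β₀' α₁' β₁' : Type}
variable [Fintype α₀] [DecidableEq α₀] [Fintype β₀] [DecidableEq β₀]
variable [Fintype α₁] [DecidableEq α₁] [Fintype β₁] [DecidableEq β₁]
variable [Fintype α₀'] [DecidableEq α₀'] [Fintype β₀'] [DecidableEq β₀']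
variable [Fintype α₁'] [DecidableEq α₁'] [Fintype β₁'] [DecidableEq β₁']

theorem stmt5 (δ : ℝ) (hδ : 0 ≤ δ)
    (Θ : Superchannel α₀ β₀ α₁ β₁ α₀' β₀' α₁' β₁') (hΘ : IsDeltaSEPPSC δ Θ)
    (N : MatMap (α₀ × β₀) (α₁ × β₁)) (hN : IsChannel N) :
    LRgen (Θ.apply N) ≤ LRgen N + Real.logb 2 (1 + δ) := by
  have hbound : 1 + genRobustness (Θ.apply N) ≤ (1 + genRobustness N) * (1 + δ) := by
    rw [mul_comm]
    refine le_mul_one_add_csInf (genRobustnessSet_nonempty hN) (by linarith) fun s hs => ?_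
    rw [mul_comm]
    exact one_add_genRobustness_apply_le hΘ hs
  have hN0 := genRobustness_nonneg N
  have hΘN0 := genRobustness_nonneg (Θ.apply N)
  rw [LRgen, LRgen, ← Real.logb_mul (by linarith) (by linarith)]
  exact Real.logb_le_logb_of_le one_lt_two (by linarith) hbound

end Statements

end DynEnt
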